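/- arXiv:2507.23706 — 2 statements merged into one kernel-verified Lean document; each statement's English description precedes it below -/
import Mathlib

section
/- Let A > 1 be an integer and n an even positive integer. Every equivalence class of primitive words in [A]^n under even cyclic shifts contains exactly n/2 words; consequently |P_n| = (2/n)·#{α ∈ [A]^n : α primitive}. -/
open Filter

namespace Winding

/-- Words of length `n` over the alphabet `{1,…,A}`; the `i`-th letter is `(α i).1 + 1`. -/
abbrev Word (A n : ℕ) : Type := Fin n → Fin A

/-- The `i`-th partial quotient `a_{i+1} ∈ {1,…,A}` of a word. -/
def letter {A n : ℕ} (α : Word A n) (i : Fin n) : ℕ := (α i).1 + 1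

/-- `α` has period `d`: `d` is a positive divisor of `n` and `a_i = a_{i+d}` whenever in range. -/
def HasPeriod {A n : ℕ} (α : Word A n) (d : ℕ) : Prop :=
  0 < d ∧ d ∣ n ∧
    ∀ (i : ℕ) (h : i + d < n),
      α ⟨i, Nat.lt_of_le_of_lt (Nat.le_add_right i d) h⟩ = α ⟨i + d, h⟩

/-- The minimal period of a word. -/
noncomputable def mp {A n : ℕ} (α : Word A n) : ℕ := sInf {d | HasPeriod α d}

/-- A word of even length `n` is primitive if `mp α = n`, or `n/2` is odd and `mp α = n/2`. -/
def Primitive {A n : ℕ} (α : Word A n) : Prop :=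
  mp α = n ∨ (Odd (n / 2) ∧ mp α = n / 2)

/-- Cyclic shift of a word by `s` positions. -/
def shift {A n : ℕ} (s : ℕ) (α : Word A n) : Word A n :=
  fun i => α ⟨(i.1 + s) % n, Nat.mod_lt _ i.pos⟩

/-- Even cyclic shift relation. -/
def ShiftRel (A n : ℕ) (α β : Word A n) : Prop :=
  ∃ s : ℕ, Even s ∧ β = shift s α

/-- Primitive words of length `n`. -/
def PrimWord (A n : ℕ) : Type := {α : Word A n // Primitive α}

instance {A n : ℕ} : Finite (PrimWord A n) := by unfold PrimWord; infer_instance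

/-- `P_n`: equivalence classes of primitive words of length `n` under even cyclic shifts. -/
def GeodClass (A n : ℕ) : Type :=
  Quot (fun α β : PrimWord A n => ShiftRel A n α.1 β.1)

instance {A n : ℕ} : Finite (GeodClass A n) :=
  Finite.of_surjective _ (Quot.mk_surjective)

instance (N : ℕ) : Finite {n : ℕ // n ≤ N ∧ Even n} :=
  Finite.of_injective (fun x => (⟨x.1, Nat.lt_succ_of_le x.2.1⟩ : Fin (N + 1)))
    fun x y h => Subtype.ext (by simpa using congrArg Fin.val h)

/-- `Π_A(N)`: the disjoint union of the `P_n` over even `n ≤ N`. -/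
def Geod (A N : ℕ) : Type := Σ n : {n : ℕ // n ≤ N ∧ Even n}, GeodClass A n.1

instance {A N : ℕ} : Finite (Geod A N) := by unfold Geod; infer_instance

/-- `π_A(N) = |Π_A(N)|`. -/
noncomputable def piA (A N : ℕ) : ℕ := Nat.card (Geod A N)

/-- The winding number `Ψ(α) = a_1 - a_2 + a_3 - ⋯ - a_n`. -/
def winding {A n : ℕ} (α : Word A n) : ℤ :=
  ∑ i : Fin n, (-1) ^ (i : ℕ) * (letter α i : ℤ)

/-- Winding number of a closed geodesic (well defined on classes since `Ψ` is invariant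
under even cyclic shifts; here computed on a choice of representative). -/
noncomputable def windingG {A N : ℕ} (C : Geod A N) : ℤ := winding C.2.out.1

/-- Period length `ℓ_p` of a closed geodesic. -/
def plenG {A N : ℕ} (C : Geod A N) : ℕ := C.1.1

/-- Word length `ℓ_w(α) = 2 ∑ a_i`. -/
def wlen {A n : ℕ} (α : Word A n) : ℕ := 2 * ∑ i : Fin n, letter α i

/-- Word length of a closed geodesic. -/
noncomputable def wlenG {A N : ℕ} (C : Geod A N) : ℕ := wlen C.2.out.1

/-- Value of a finite continued fraction `b_1 + 1/(b_2 + 1/(⋯ + 1/b_k))`. -/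
noncomputable def cfVal : List ℕ → ℝ
  | [] => 0
  | b :: l => b + 1 / cfVal l

/-- The block `l` repeated `m` times. -/
def repBlock (l : List ℕ) : ℕ → List ℕ
  | 0 => []
  | m + 1 => l ++ repBlock l m

/-- Value of the purely periodic continued fraction with repeating block `l`:
the limit of the values of the finite continued fractions obtained by repeating `l`. -/
noncomputable def periodicVal (l : List ℕ) : ℝ :=
  limUnder atTop fun m => cfVal (repBlock l m)

/-- The list of partial quotients of a word. -/
def toList {A n : ℕ} (α : Word A n) : List ℕ := List.ofFn (letter α)

/-- `T^j ᾱ`: the purely periodic continued fraction whose repeating block is the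
cyclic shift of `α` by `j`. -/
noncomputable def Tpow {A n : ℕ} (α : Word A n) (j : ℕ) : ℝ :=
  periodicVal (toList (shift j α))

/-- Geometric length `ℓ_g(α) = 2 ∑_{j=1}^n log (T^j ᾱ)`. -/
noncomputable def glen {A n : ℕ} (α : Word A n) : ℝ :=
  2 * ∑ j : Fin n, Real.log (Tpow α (j.1 + 1))

/-- Geometric length of a closed geodesic. -/
noncomputable def glenG {A N : ℕ} (C : Geod A N) : ℝ := glen C.2.out.1



section Aux
variable {A n : ℕ}

lemma shift_zero' (α : Word A n) : shift 0 α = α := by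
  funext i
  simp only [shift]
  congr 1
  exact Fin.ext (by simp [Nat.mod_eq_of_lt i.2])

lemma shift_shift (a b : ℕ) (α : Word A n) :
    shift a (shift b α) = shift (a + b) α := by
  funext i
  simp only [shift]
  congr 1
  apply Fin.ext
  show ((i.1 + a) % n + b) % n = (i.1 + (a + b)) % n
  rw [Nat.mod_add_mod, Nat.add_assoc]

lemma shift_mod (s : ℕ) (α : Word A n) : shift (s % n) α = shift s α := by
  funext i
  simp only [shift]
  congr 1
  apply Fin.ext
  show (i.1 + s % n) % n = (i.1 + s) % n
  conv_rhs => rw [Nat.add_mod, Nat.mod_eq_of_lt i.2]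

lemma shift_mul {t : ℕ} {α : Word A n} (h : shift t α = α) (u : ℕ) :
    shift (t * u) α = α := by
  induction u with
  | zero => simpa using shift_zero' α
  | succ u ih =>
    have : t * (u + 1) = t * u + t := by ring
    rw [this, ← shift_shift, h, ih]

lemma shift_n (hn : 0 < n) (α : Word A n) : shift n α = α := by
  rw [← shift_mod, Nat.mod_self, shift_zero']

lemma shift_left_cancel (hn : 0 < n) {s : ℕ} {α β : Word A n}
    (h : shift s α = shift s β) : α = β := by
  have key : ∀ γ : Word A n, shift (s * (n - 1)) (shift s γ) = γ := by
    intro γ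
    rw [shift_shift]
    have : s * (n - 1) + s = s * n := by
      have : n - 1 + 1 = n := Nat.succ_pred_eq_of_pos hn
      calc s * (n - 1) + s = s * (n - 1 + 1) := by ring
        _ = s * n := by rw [this]
    rw [this, ← shift_mod, Nat.mul_mod_left, shift_zero']
  calc α = shift (s * (n - 1)) (shift s α) := (key α).symm
    _ = shift (s * (n - 1)) (shift s β) := by rw [h]
    _ = β := key β

/-- periodicity with d gives value depends only on residue mod d -/
lemma period_mod {α : Word A n} {d : ℕ} (h : HasPeriod α d) :
    ∀ i (hi : i < n), α ⟨i, hi⟩ = α ⟨i % d, lt_of_le_of_lt (Nat.mod_le _ _) hi⟩ := by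
  obtain ⟨hd, _, hper⟩ := h
  intro i
  induction i using Nat.strong_induction_on with
  | _ i ih =>
    intro hi
    rcases Nat.lt_or_ge i d with hlt | hge
    · congr 1
      exact Fin.ext (by simp [Nat.mod_eq_of_lt hlt])
    · have hsub : i - d + d = i := Nat.sub_add_cancel hge
      have h1 : i - d + d < n := by omega
      have h2 := hper (i - d) h1
      have h3 : i - d < i := by omega
      have h4 := ih (i - d) h3 (by omega)
      have hfin : (⟨i, hi⟩ : Fin n) = ⟨i - d + d, h1⟩ := by
        apply Fin.ext
        show i = i - d + d
        omega
      have : α ⟨i, hi⟩ = α ⟨i - d, by omega⟩ := by rw [hfin, ← h2]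
      rw [this, h4]
      congr 1
      apply Fin.ext
      show (i - d) % d = i % d
      conv_rhs => rw [← hsub, Nat.add_mod_right]

lemma hasPeriod_iff_shift (hn : 0 < n) (α : Word A n) (d : ℕ) :
    HasPeriod α d ↔ 0 < d ∧ d ∣ n ∧ shift d α = α := by
  constructor
  · intro h
    obtain ⟨hd, hdn, hper⟩ := h
    refine ⟨hd, hdn, ?_⟩
    funext i
    have hidn : (i.1 + d) % n < n := Nat.mod_lt _ hn
    show α ⟨(i.1 + d) % n, _⟩ = α i
    have e1 := period_mod ⟨hd, hdn, hper⟩ ((i.1 + d) % n) hidn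
    have e2 := period_mod ⟨hd, hdn, hper⟩ i.1 i.2
    have emod : (i.1 + d) % n % d = i.1 % d := by
      rw [Nat.mod_mod_of_dvd _ hdn, Nat.add_mod_right]
    have : α i = α ⟨i.1, i.2⟩ := by congr 1
    rw [this, e1, e2]
    congr 1
    exact Fin.ext emod
  · intro ⟨hd, hdn, hsh⟩
    refine ⟨hd, hdn, ?_⟩
    intro i h
    have := congrFun hsh ⟨i, by omega⟩
    simp only [shift] at this
    rw [← this]
    congr 1
    exact Fin.ext (by simp [Nat.mod_eq_of_lt h])

lemma hasPeriod_gcd (hn : 0 < n) {α : Word A n} {t : ℕ} (h : shift t α = α) :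
    HasPeriod α (Nat.gcd t n) := by
  rw [hasPeriod_iff_shift hn]
  refine ⟨Nat.gcd_pos_of_pos_right _ hn, Nat.gcd_dvd_right _ _, ?_⟩
  -- find u with (t * u) % n = gcd t n % n
  set g := Nat.gcd t n with hg
  have hbez : (g : ℤ) = t * Nat.gcdA t n + n * Nat.gcdB t n := Nat.gcd_eq_gcd_ab t n
  set a : ℤ := Nat.gcdA t n
  set b : ℤ := Nat.gcdB t n
  have hn0 : (n : ℤ) ≠ 0 := by exact_mod_cast hn.ne'
  set u : ℕ := (a % n).toNat with hu
  have hucast : (u : ℤ) = a % n := Int.toNat_of_nonneg (Int.emod_nonneg a hn0)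
  have hmod : ((t * u : ℕ) : ℤ) % n = (g : ℤ) % n := by
    push_cast
    rw [hucast]
    calc (t : ℤ) * (a % n) % n = (t : ℤ) * a % n := by
          rw [Int.mul_emod, Int.emod_emod_of_dvd _ dvd_rfl, ← Int.mul_emod]
      _ = (g : ℤ) % n := by
          rw [hbez, Int.add_mul_emod_self_left]
  have hmodn : (t * u) % n = g % n := by
    have : (((t * u) % n : ℕ) : ℤ) = ((g % n : ℕ) : ℤ) := by
      push_cast
      exact hmod
    exact_mod_cast this
  calc shift g α = shift (g % n) α := (shift_mod g α).symm
    _ = shift ((t * u) % n) α := by rw [hmodn]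
    _ = shift (t * u) α := shift_mod _ α
    _ = α := shift_mul h u

lemma mp_le_of_shift (hn : 0 < n) {α : Word A n} {t : ℕ} (h : shift t α = α) :
    mp α ≤ Nat.gcd t n :=
  Nat.sInf_le (hasPeriod_gcd hn h)

/-- For a primitive word, an even shift fixing it must be a multiple of n. -/
lemma prim_stab (hn : 0 < n) (hne : Even n) {α : Word A n} (hp : Primitive α)
    {t : ℕ} (ht : Even t) (h : shift t α = α) : n ∣ t := by
  set g := Nat.gcd t n with hg
  have hgn : g ∣ n := Nat.gcd_dvd_right _ _
  have hgt : g ∣ t := Nat.gcd_dvd_left _ _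
  have hle : mp α ≤ g := mp_le_of_shift hn h
  have hgle : g ≤ n := Nat.le_of_dvd hn hgn
  have h2n : 2 ∣ n := hne.two_dvd
  rcases hp with hmp | ⟨hodd, hmp⟩
  · have : g = n := by omega
    rw [← this]; exact hgt
  · -- mp α = n/2, n/2 odd
    have hle2 : n / 2 ≤ g := hmp ▸ hle
    rcases eq_or_lt_of_le hgle with heq | hlt
    · rw [← heq]; exact hgt
    · exfalso
      -- g < n, g ∣ n, g ≥ n/2 ⇒ g = n/2
      obtain ⟨c, hc⟩ := hgn
      have hc2 : 2 ≤ c := by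
        rcases Nat.lt_or_ge c 2 with h2 | h2
        · interval_cases c <;> omega
        · exact h2
      have : g * 2 ≤ n := by
        calc g * 2 ≤ g * c := Nat.mul_le_mul_left g hc2
          _ = n := hc.symm
      have hgeq : g = n / 2 := by omega
      have h2g : 2 ∣ g := Nat.dvd_gcd ht.two_dvd h2n
      rw [Nat.odd_iff] at hodd
      omega

lemma mp_shift (hn : 0 < n) (t : ℕ) (α : Word A n) : mp (shift t α) = mp α := by
  have hset : {d | HasPeriod (shift t α) d} = {d | HasPeriod α d} := by
    ext d
    simp only [Set.mem_setOf_eq, hasPeriod_iff_shift hn]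
    constructor
    · rintro ⟨hd, hdn, hsh⟩
      refine ⟨hd, hdn, ?_⟩
      apply shift_left_cancel hn (s := t)
      rw [shift_shift, Nat.add_comm, ← shift_shift, hsh]
    · rintro ⟨hd, hdn, hsh⟩
      refine ⟨hd, hdn, ?_⟩
      rw [shift_shift, Nat.add_comm, ← shift_shift, hsh]
  unfold mp
  rw [hset]

lemma prim_shift (hn : 0 < n) (t : ℕ) {α : Word A n} (hp : Primitive α) :
    Primitive (shift t α) := by
  unfold Primitive at *
  rw [mp_shift hn t]
  exact hp

lemma shiftRel_equiv (hn : 0 < n) :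
    Equivalence (fun α β : PrimWord A n => ShiftRel A n α.1 β.1) := by
  constructor
  · intro α
    exact ⟨0, Even.zero, (shift_zero' α.1).symm⟩
  · rintro α β ⟨s, hs, hsh⟩
    refine ⟨s * (n - 1), hs.mul_right _, ?_⟩
    rw [hsh, shift_shift]
    have h1 : s * (n - 1) + s = s * n := by
      have : n - 1 + 1 = n := Nat.succ_pred_eq_of_pos hn
      calc s * (n - 1) + s = s * (n - 1 + 1) := by ring
        _ = s * n := by rw [this]
    rw [h1, ← shift_mod, Nat.mul_mod_left, shift_zero']
  · rintro α β γ ⟨s, hs, hsh⟩ ⟨t, ht, hth⟩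
    exact ⟨t + s, ht.add hs, by rw [hth, hsh, shift_shift]⟩

end Aux


-- STATEMENT 8
theorem stmt8 (A n : ℕ) (hA : 1 < A) (hn : 0 < n) (hne : Even n) :
    (∀ C : GeodClass A n,
        Nat.card {α : PrimWord A n //
          Quot.mk (fun α β : PrimWord A n => ShiftRel A n α.1 β.1) α = C} = n / 2) ∧
      (Nat.card (GeodClass A n) : ℚ) =
        2 / (n : ℚ) * (Nat.card (PrimWord A n) : ℚ) := by
  classical
  set r := fun α β : PrimWord A n => ShiftRel A n α.1 β.1 with hr
  have hequiv : Equivalence r := shiftRel_equiv hn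
  have h2n : 2 ∣ n := hne.two_dvd
  have key : ∀ C : GeodClass A n,
      Nat.card {α : PrimWord A n // Quot.mk r α = C} = n / 2 := by
    intro C
    obtain ⟨α₀, rfl⟩ := Quot.exists_rep C
    have hmk : ∀ x : PrimWord A n, Quot.mk r x = Quot.mk r α₀ ↔ r x α₀ := by
      intro x
      rw [Quot.eq]
      exact hequiv.eqvGen_iff
    set f : Fin (n / 2) → {x : PrimWord A n // Quot.mk r x = Quot.mk r α₀} :=
      fun k => ⟨⟨shift (2 * k.1) α₀.1, prim_shift hn _ α₀.2⟩,
        (hmk _).mpr (hequiv.symm ⟨2 * k.1, even_two_mul _, rfl⟩)⟩ with hf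
    have hbij : Function.Bijective f := by
      constructor
      · intro k j hkj
        have heq : shift (2 * k.1) α₀.1 = shift (2 * j.1) α₀.1 := by
          have := congrArg (fun x => x.1.1) hkj
          simpa [hf] using this
        apply Fin.ext
        have h1 : shift (2 * (n / 2 - j.1)) (shift (2 * k.1) α₀.1)
            = shift (2 * (n / 2 - j.1) + 2 * k.1) α₀.1 := shift_shift _ _ _
        have h2 : shift (2 * (n / 2 - j.1)) (shift (2 * j.1) α₀.1)
            = shift (2 * (n / 2 - j.1) + 2 * j.1) α₀.1 := shift_shift _ _ _
        have hj2 := j.2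
        have hk2 := k.2
        have h3 : 2 * (n / 2 - j.1) + 2 * j.1 = n := by omega
        have h4 : shift (2 * (n / 2 - j.1) + 2 * k.1) α₀.1 = α₀.1 := by
          rw [← h1, heq, h2, h3, shift_n hn]
        have h5 : n ∣ 2 * (n / 2 - j.1) + 2 * k.1 :=
          prim_stab hn hne α₀.2 ((even_two_mul _).add (even_two_mul _)) h4
        obtain ⟨c, hc⟩ := h5
        have hc1 : c = 1 := by
          rcases Nat.lt_or_ge c 2 with hlt | hge
          · interval_cases c <;> omega
          · exfalso
            have : n * 2 ≤ n * c := Nat.mul_le_mul_left n hge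
            omega
        subst hc1
        omega
      · rintro ⟨x, hx⟩
        have hrx : r α₀ x := hequiv.symm ((hmk x).mp hx)
        obtain ⟨s, hs, hsh⟩ := hrx
        have hsn : x.1 = shift (s % n) α₀.1 := by rw [shift_mod]; exact hsh
        have hsme : Even (s % n) := by
          have hd := Nat.div_add_mod s n
          have h1 : Even (n * (s / n)) := hne.mul_right _
          have h2 : Even (n * (s / n) + s % n) := by rw [hd]; exact hs
          exact (Nat.even_add.mp h2).mp h1
        have hlt : s % n < n := Nat.mod_lt _ hn
        refine ⟨⟨(s % n) / 2, by omega⟩, ?_⟩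
        apply Subtype.ext
        apply Subtype.ext
        show shift (2 * ((s % n) / 2)) α₀.1 = x.1
        have h6 : 2 * ((s % n) / 2) = s % n := by
          rw [Nat.even_iff] at hsme
          omega
        rw [h6, ← hsn]
    rw [← Nat.card_eq_of_bijective f hbij, Nat.card_eq_fintype_card, Fintype.card_fin]
  refine ⟨key, ?_⟩
  letI : Fintype (PrimWord A n) := Fintype.ofFinite _
  letI : Finite (Quot r) := Finite.of_surjective _ Quot.mk_surjective
  letI : Fintype (Quot r) := Fintype.ofFinite _
  have hGQ : Nat.card (GeodClass A n) = Nat.card (Quot r) := rfl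
  have hsum : Nat.card (PrimWord A n) = Nat.card (Quot r) * (n / 2) := by
    have h1 : (Finset.univ : Finset (PrimWord A n)).card =
        ∑ C : Quot r, (Finset.univ.filter (fun x : PrimWord A n => Quot.mk r x = C)).card :=
      Finset.card_eq_sum_card_fiberwise (fun x _ => Finset.mem_univ _)
    have h2 : ∀ C : Quot r,
        (Finset.univ.filter (fun x : PrimWord A n => Quot.mk r x = C)).card = n / 2 := by
      intro C
      rw [← Fintype.card_subtype, ← Nat.card_eq_fintype_card]
      exact key C
    rw [Nat.card_eq_fintype_card, Nat.card_eq_fintype_card, ← Finset.card_univ, h1,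
      Finset.sum_congr rfl (fun C _ => h2 C), Finset.sum_const, Finset.card_univ, smul_eq_mul]
  have hn2 : ((n : ℚ)) ≠ 0 := by exact_mod_cast hn.ne'
  have h22 : ((n / 2 : ℕ) : ℚ) * 2 = (n : ℚ) := by
    exact_mod_cast Nat.div_mul_cancel h2n
  rw [hGQ, hsum]
  push_cast
  rw [div_mul_eq_mul_div, eq_div_iff hn2, ← h22]
  ring

end Winding
end

section
/- Let A > 1 be an integer and define c_k = (2/A^k) ∑_{w ∈ [A]^k} log(val(w)) for k ≥ 1. Then for all integers j ≥ k ≥ 1 one has |c_k − c_j| ≤ 2/F_k², where F_k is the k-th Fibonacci number (F_1 = F_2 = 1). In particular, the sequence (c_k) is Cauchy and converges to a real limit. -/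
/-!
Splitting a word of length `j = k + m` as `u ++ v` (`u` of length `k`) turns `c_j` into an
average over pairs `(u, v)`, so `|c_k - c_j|` is at most twice the largest value of
`|log val(u) - log val(u ++ v)|`. Since `log` is `1`-Lipschitz on `[1, ∞)`, this is bounded by
`|val(u) - val(u ++ v)|`. Both values are `[u₁; …, u_k, t]` for a tail `t⁻¹ ∈ [0, 1]`, i.e. the
Möbius map `x ↦ (p + p' x) / (q + q' x)` of `x = t⁻¹`, whose matrix has determinant `±1` and
denominators `q ≥ F_k`; so the two values differ by at most `1 / F_k²`.
-/

open Filter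

namespace Winding

open Finset
open scoped BigOperators

/-- `cfEval l t = [b₁; …, b_n, t]`. -/
noncomputable def cfEval : List ℕ → ℝ → ℝ
  | [], t => t
  | b :: l, t => b + 1 / cfEval l t

lemma cfVal_append (l m : List ℕ) : cfVal (l ++ m) = cfEval l (cfVal m) := by
  induction l with
  | nil => rfl
  | cons b l ih => simp only [List.cons_append, cfVal, cfEval, ih]

lemma cfVal_nonneg : ∀ l : List ℕ, 0 ≤ cfVal l
  | [] => le_rfl
  | b :: l => by have := cfVal_nonneg l; simp only [cfVal]; positivity

lemma one_le_cfVal {l : List ℕ} (hl : l ≠ []) (hb : ∀ b ∈ l, 1 ≤ b) : 1 ≤ cfVal l := by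
  obtain ⟨b, l, rfl⟩ := List.exists_cons_of_ne_nil hl
  have hb1 : (1 : ℝ) ≤ b := by exact_mod_cast hb b List.mem_cons_self
  have : 0 ≤ 1 / cfVal l := one_div_nonneg.2 (cfVal_nonneg l)
  simp only [cfVal]
  linarith

/-- `cfVal [] = 0`, so the inverse of the value of the empty word is the junk value `0⁻¹ = 0`. -/
lemma inv_cfVal_mem_Icc {l : List ℕ} (hb : ∀ b ∈ l, 1 ≤ b) : (cfVal l)⁻¹ ∈ Set.Icc 0 1 := by
  refine ⟨inv_nonneg.2 (cfVal_nonneg l), ?_⟩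
  rcases eq_or_ne l [] with rfl | hl
  · simp [cfVal]
  · exact inv_le_one_of_one_le₀ (one_le_cfVal hl hb)

/-- `(p q' - p' q)` is the determinant of `∏ [[bᵢ, 1], [1, 0]] = [[p, p'], [q, q']]`. -/
lemma exists_cfEval_inv_eq_div : ∀ l : List ℕ, (∀ b ∈ l, 1 ≤ b) →
    ∃ p q p' q' : ℕ, Nat.fib (l.length + 1) ≤ p ∧ Nat.fib l.length ≤ q ∧
      (p * q' - p' * q : ℤ) = (-1) ^ l.length ∧
      ∀ x : ℝ, 0 ≤ x → cfEval l x⁻¹ = (p + p' * x) / (q + q' * x)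
  | [], _ => ⟨1, 0, 0, 1, by simp, by simp, by simp, fun x _ => by simp [cfEval]⟩
  | b :: l, hb => by
    obtain ⟨p, q, p', q', hp, hq, hdet, heval⟩ :=
      exists_cfEval_inv_eq_div l fun c hc => hb c (List.mem_cons_of_mem b hc)
    have hb1 : 1 ≤ b := hb b List.mem_cons_self
    refine ⟨b * p + q, p, b * p' + q', p', ?_, hp, ?_, fun x hx => ?_⟩
    · calc Nat.fib ((b :: l).length + 1) = Nat.fib (l.length + 1) + Nat.fib l.length := by
            rw [List.length_cons, Nat.fib_add_two, add_comm]
        _ ≤ b * p + q := by gcongr; nlinarith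
    · rw [List.length_cons, pow_succ]; push_cast; linear_combination (-1 : ℤ) * hdet
    · have hp0 : (0 : ℝ) < p + p' * x := by
        have : (1 : ℝ) ≤ p := by exact_mod_cast (Nat.fib_pos.2 l.length.succ_pos).trans_le hp
        positivity
      rw [cfEval, heval x hx, one_div_div, add_div' _ _ _ hp0.ne']
      push_cast
      ring

lemma abs_cfEval_inv_sub_le {l : List ℕ} (hl : l ≠ []) (hb : ∀ b ∈ l, 1 ≤ b) {x y : ℝ}
    (hx : x ∈ Set.Icc (0 : ℝ) 1) (hy : y ∈ Set.Icc (0 : ℝ) 1) :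
    |cfEval l x⁻¹ - cfEval l y⁻¹| ≤ 1 / (Nat.fib l.length : ℝ) ^ 2 := by
  obtain ⟨p, q, p', q', -, hq, hdet, heval⟩ := exists_cfEval_inv_eq_div l hb
  have hF : (1 : ℝ) ≤ Nat.fib l.length := by
    exact_mod_cast Nat.fib_pos.2 (List.length_pos_iff.2 hl)
  have hFq : (Nat.fib l.length : ℝ) ≤ q := by exact_mod_cast hq
  have hdetℝ : (p * q' - p' * q : ℝ) = (-1) ^ l.length := by exact_mod_cast hdet
  have hqx : (Nat.fib l.length : ℝ) ≤ q + q' * x := by nlinarith [hx.1]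
  have hqy : (Nat.fib l.length : ℝ) ≤ q + q' * y := by nlinarith [hy.1]
  have hqx0 : (0 : ℝ) < q + q' * x := by linarith
  have hqy0 : (0 : ℝ) < q + q' * y := by linarith
  have hxy : |x - y| ≤ 1 := abs_sub_le_iff.2 ⟨by linarith [hx.2, hy.1], by linarith [hx.1, hy.2]⟩
  rw [heval x hx.1, heval y hy.1, div_sub_div _ _ hqx0.ne' hqy0.ne',
    show ((p + p' * x) * (q + q' * y) - (q + q' * x) * (p + p' * y) : ℝ)
      = -(p * q' - p' * q) * (x - y) by ring,
    hdetℝ, abs_div, abs_mul, abs_neg, abs_pow, abs_neg, abs_one, one_pow, one_mul,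
    abs_of_pos (mul_pos hqx0 hqy0), sq]
  gcongr

lemma abs_cfVal_append_sub_le {l m : List ℕ} (hl : l ≠ []) (hbl : ∀ b ∈ l, 1 ≤ b)
    (hbm : ∀ b ∈ m, 1 ≤ b) : |cfVal (l ++ m) - cfVal l| ≤ 1 / (Nat.fib l.length : ℝ) ^ 2 := by
  have hval : cfVal l = cfEval l (0 : ℝ)⁻¹ := by simpa [cfVal] using cfVal_append l []
  rw [cfVal_append, hval, ← inv_inv (cfVal m)]
  exact abs_cfEval_inv_sub_le hl hbl (inv_cfVal_mem_Icc hbm) ⟨le_rfl, zero_le_one⟩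

lemma _root_.Real.abs_log_sub_log_le {a b : ℝ} (ha : 1 ≤ a) (hb : 1 ≤ b) :
    |Real.log a - Real.log b| ≤ |a - b| := by
  have key : ∀ a b : ℝ, 1 ≤ a → 1 ≤ b → Real.log a - Real.log b ≤ |a - b| := by
    intro a b ha hb
    calc Real.log a - Real.log b = Real.log (a / b) := (Real.log_div (by positivity)
            (by positivity)).symm
      _ ≤ a / b - 1 := Real.log_le_sub_one_of_pos (by positivity)
      _ = (a - b) / b := by field_simp
      _ ≤ |a - b| / b := by gcongr; exact le_abs_self _
      _ ≤ |a - b| := div_le_self (abs_nonneg _) hb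
  exact abs_sub_le_iff.2 ⟨key a b ha hb, abs_sub_comm a b ▸ key b a hb ha⟩

lemma abs_expect_sub_expect_prod_le {α β : Type*} [Fintype α] [Fintype β] [Nonempty α]
    [Nonempty β] (f : α → ℝ) (g : α × β → ℝ) {ε : ℝ} (h : ∀ a b, |f a - g (a, b)| ≤ ε) :
    |𝔼 a, f a - 𝔼 p, g p| ≤ ε := by
  have hf : 𝔼 a, f a = 𝔼 p : α × β, f p.1 := by
    rw [← univ_product_univ, expect_product]
    simp only [expect_const univ_nonempty]
  rw [hf, ← expect_sub_distrib]
  exact (abs_expect_le _ _).trans (expect_le univ_nonempty fun p _ => h p.1 p.2)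

lemma one_le_of_mem_toList {A n : ℕ} (α : Word A n) : ∀ b ∈ toList α, 1 ≤ b := by
  simp [toList, letter]

lemma length_toList {A n : ℕ} (α : Word A n) : (toList α).length = n := by
  simp [toList]

lemma toList_append {A k m : ℕ} (u : Word A k) (v : Word A m) :
    toList (Fin.append u v) = toList u ++ toList v := by
  simp only [toList]
  rw [← List.ofFn_fin_append]
  congr 1
  funext i
  induction i using Fin.addCases <;> simp [letter]

lemma one_le_cfVal_toList {A n : ℕ} (hn : 1 ≤ n) (α : Word A n) : 1 ≤ cfVal (toList α) :=
  one_le_cfVal (List.ne_nil_of_length_pos (by rwa [length_toList])) (one_le_of_mem_toList α)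

lemma abs_log_cfVal_toList_append_sub_le {A k m : ℕ} (hk : 1 ≤ k) (u : Word A k)
    (v : Word A m) :
    |Real.log (cfVal (toList u)) - Real.log (cfVal (toList (Fin.append u v)))| ≤
      1 / (Nat.fib k : ℝ) ^ 2 := by
  have huv : 1 ≤ cfVal (toList (Fin.append u v)) := one_le_cfVal_toList (by omega) _
  calc _ ≤ |cfVal (toList u) - cfVal (toList (Fin.append u v))| :=
        Real.abs_log_sub_log_le (one_le_cfVal_toList hk u) huv
    _ = |cfVal (toList u ++ toList v) - cfVal (toList u)| := by rw [toList_append, abs_sub_comm]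
    _ ≤ 1 / (Nat.fib k : ℝ) ^ 2 := by
        simpa only [length_toList] using abs_cfVal_append_sub_le
          (List.ne_nil_of_length_pos (by rwa [length_toList])) (one_le_of_mem_toList u)
          (one_le_of_mem_toList v)

/-- The number `c_k`. -/
noncomputable def meanLogCfVal (A k : ℕ) : ℝ :=
  2 / (A : ℝ) ^ k * ∑ w : Word A k, Real.log (cfVal (toList w))

lemma meanLogCfVal_eq_expect (A k : ℕ) :
    meanLogCfVal A k = 2 * 𝔼 w : Word A k, Real.log (cfVal (toList w)) := by
  rw [meanLogCfVal, Fintype.expect_eq_sum_div_card, Fintype.card_fun, Fintype.card_fin,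
    Fintype.card_fin, Nat.cast_pow]
  ring

lemma abs_meanLogCfVal_sub_le {A k j : ℕ} (hA : 0 < A) (hk : 1 ≤ k) (hkj : k ≤ j) :
    |meanLogCfVal A k - meanLogCfVal A j| ≤ 2 / (Nat.fib k : ℝ) ^ 2 := by
  obtain ⟨m, rfl⟩ := Nat.exists_eq_add_of_le hkj
  have : NeZero A := ⟨hA.ne'⟩
  have hsplit : 𝔼 w : Word A (k + m), Real.log (cfVal (toList w)) =
      𝔼 p : Word A k × Word A m, Real.log (cfVal (toList (Fin.append p.1 p.2))) :=
    (Fintype.expect_equiv (Fin.appendEquiv k m) _ _ fun _ => rfl).symm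
  rw [meanLogCfVal_eq_expect, meanLogCfVal_eq_expect, hsplit, ← mul_sub, abs_mul, abs_two,
    ← mul_one_div (2 : ℝ)]
  gcongr
  exact abs_expect_sub_expect_prod_le _ _ (abs_log_cfVal_toList_append_sub_le hk)

lemma tendsto_div_fib_sq_atTop (C : ℝ) :
    Tendsto (fun n => C / (Nat.fib n : ℝ) ^ 2) atTop (nhds 0) := by
  have hfib : Tendsto Nat.fib atTop atTop :=
    (tendsto_add_atTop_iff_nat 2).1 Nat.fib_add_two_strictMono.tendsto_atTop
  exact tendsto_const_nhds.div_atTop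
    ((tendsto_pow_atTop two_ne_zero).comp (tendsto_natCast_atTop_iff.2 hfib))

theorem stmt17 (A : ℕ) (hA : 1 < A) :
    (∀ k j : ℕ, 1 ≤ k → k ≤ j →
        |2 / (A : ℝ) ^ k * ∑ w : Word A k, Real.log (cfVal (toList w)) -
            2 / (A : ℝ) ^ j * ∑ w : Word A j, Real.log (cfVal (toList w))| ≤
          2 / (Nat.fib k : ℝ) ^ 2) ∧
      ∃ L : ℝ,
        Tendsto
          (fun k : ℕ => 2 / (A : ℝ) ^ k * ∑ w : Word A k, Real.log (cfVal (toList w)))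
          atTop (nhds L) := by
  have hbound : ∀ k j : ℕ, 1 ≤ k → k ≤ j →
      |meanLogCfVal A k - meanLogCfVal A j| ≤ 2 / (Nat.fib k : ℝ) ^ 2 :=
    fun _ _ hk hkj => abs_meanLogCfVal_sub_le (zero_lt_one.trans hA) hk hkj
  refine ⟨hbound, ?_⟩
  have hcauchy : CauchySeq fun n => meanLogCfVal A (n + 1) :=
    cauchySeq_of_le_tendsto_0' (fun n => 2 / (Nat.fib (n + 1) : ℝ) ^ 2)
      (fun n m hnm => (Real.dist_eq _ _).trans_le (hbound _ _ (by omega) (by omega)))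
      ((tendsto_add_atTop_iff_nat 1).2 (tendsto_div_fib_sq_atTop 2))
  obtain ⟨L, hL⟩ := cauchySeq_tendsto_of_complete hcauchy
  exact ⟨L, (tendsto_add_atTop_iff_nat 1).1 hL⟩

end Winding
end
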